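/- Let Φ : D² → ℝ^m be a smooth biharmonic immersion, i.e. its mean curvature vector satisfies Δ_g H = 0 on D², where Δ_g f := |g|^{−1/2} ∂_j( |g|^{1/2} g^{jk} ∂_k f ) applied componentwise. Then, pointwise on D²: Δ_⊥H = g^{jl}g^{km} (H·h_{lm}) h_{jk}, and consequently the Willmore operator of Φ satisfies W⃗ = 2 g^{jl}g^{km} (H·h_{lm}) h_{jk} − 2|H|² H. -/

import Mathlib

noncomputable section

open scoped RealInnerProductSpace

abbrev E2 : Type := EuclideanSpace ℝ (Fin 2)

/-- Partial derivative of a map on `ℝ²` in the `i`-th coordinate direction. -/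
def pd {F : Type*} [NormedAddCommGroup F] [NormedSpace ℝ F]
    (i : Fin 2) (f : E2 → F) (x : E2) : F :=
  fderiv ℝ f x (EuclideanSpace.single i 1)

variable {m : ℕ}

/-- Induced metric. -/
def gm (Φ : E2 → EuclideanSpace ℝ (Fin m)) (x : E2) (i j : Fin 2) : ℝ :=
  ⟪pd i Φ x, pd j Φ x⟫

/-- Determinant of the induced metric. -/
def gdet (Φ : E2 → EuclideanSpace ℝ (Fin m)) (x : E2) : ℝ :=
  gm Φ x 0 0 * gm Φ x 1 1 - gm Φ x 0 1 * gm Φ x 1 0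

/-- Inverse metric. -/
def ginv (Φ : E2 → EuclideanSpace ℝ (Fin m)) (x : E2) (i j : Fin 2) : ℝ :=
  (Matrix.of (gm Φ x))⁻¹ i j

/-- Orthogonal projection onto the normal space of `Φ` at `x`. -/
def piN (Φ : E2 → EuclideanSpace ℝ (Fin m)) (x : E2) (v : EuclideanSpace ℝ (Fin m)) :
    EuclideanSpace ℝ (Fin m) :=
  (Submodule.orthogonalProjection ((Submodule.span ℝ {pd 0 Φ x, pd 1 Φ x})ᗮ) v :
    EuclideanSpace ℝ (Fin m))

/-- Second fundamental form. -/
def sff (Φ : E2 → EuclideanSpace ℝ (Fin m)) (x : E2) (i j : Fin 2) :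
    EuclideanSpace ℝ (Fin m) :=
  piN Φ x (pd i (pd j Φ) x)

/-- Mean curvature vector. -/
def mcv (Φ : E2 → EuclideanSpace ℝ (Fin m)) (x : E2) : EuclideanSpace ℝ (Fin m) :=
  (1/2 : ℝ) • ∑ i : Fin 2, ∑ j : Fin 2, ginv Φ x i j • sff Φ x i j

/-- Normal Laplacian. -/
def nlap (Φ : E2 → EuclideanSpace ℝ (Fin m)) (N : E2 → EuclideanSpace ℝ (Fin m)) (x : E2) :
    EuclideanSpace ℝ (Fin m) :=
  (Real.sqrt (gdet Φ x))⁻¹ •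
    piN Φ x (∑ j : Fin 2, pd j
      (fun y => Real.sqrt (gdet Φ y) • ∑ k : Fin 2, ginv Φ y j k • piN Φ y (pd k N y)) x)

/-- Willmore operator. -/
def willmoreOp (Φ : E2 → EuclideanSpace ℝ (Fin m)) (x : E2) : EuclideanSpace ℝ (Fin m) :=
  nlap Φ (mcv Φ) x
    + ∑ i : Fin 2, ∑ j : Fin 2, ∑ k : Fin 2, ∑ l : Fin 2,
        (ginv Φ x i k * ginv Φ x j l * ⟪sff Φ x k l, mcv Φ x⟫) • sff Φ x i j
    - (2 * ‖mcv Φ x‖ ^ 2) • mcv Φ x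

/-- Stress tensor. -/
def stress (Φ : E2 → EuclideanSpace ℝ (Fin m)) (x : E2) (j : Fin 2) :
    EuclideanSpace ℝ (Fin m) :=
  ∑ k : Fin 2, ginv Φ x j k •
    (pd k (mcv Φ) x - (2:ℝ) • piN Φ x (pd k (mcv Φ) x) + (‖mcv Φ x‖ ^ 2) • pd k Φ x)

/-- The open unit disk in `ℝ²`. -/
def Disk : Set E2 := Metric.ball 0 1

/-- Immersion condition on the disk. -/
def ImmersedOn (Φ : E2 → EuclideanSpace ℝ (Fin m)) : Prop :=
  ∀ x ∈ Disk, LinearIndependent ℝ ![pd 0 Φ x, pd 1 Φ x]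


/-- Laplace–Beltrami operator of the induced metric, applied componentwise:
`Δ_g f = |g|^{-1/2} ∂_j(|g|^{1/2} g^{jk} ∂_k f)`. -/
def lapB {m : ℕ} {F : Type*} [NormedAddCommGroup F] [NormedSpace ℝ F]
    (Φ : E2 → EuclideanSpace ℝ (Fin m)) (f : E2 → F) (x : E2) : F :=
  (Real.sqrt (gdet Φ x))⁻¹ •
    ∑ j : Fin 2, pd j
      (fun y => Real.sqrt (gdet Φ y) • ∑ k : Fin 2, ginv Φ y j k • pd k f y) x

/-! ### Auxiliary lemmas -/

lemma disk_open : IsOpen Disk := Metric.isOpen_ball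

lemma disk_mem_nhds {x : E2} (hx : x ∈ Disk) : Disk ∈ nhds x :=
  disk_open.mem_nhds hx

lemma pd_congr {F : Type*} [NormedAddCommGroup F] [NormedSpace ℝ F]
    {f g : E2 → F} {x : E2} (h : f =ᶠ[nhds x] g) (i : Fin 2) :
    pd i f x = pd i g x := by
  unfold pd; rw [h.fderiv_eq]

lemma pd_contDiffAt {F : Type*} [NormedAddCommGroup F] [NormedSpace ℝ F]
    {f : E2 → F} {x : E2} (hf : ContDiffAt ℝ (⊤ : ℕ∞) f x) (i : Fin 2) :
    ContDiffAt ℝ (⊤ : ℕ∞) (pd i f) x := by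
  have h1 : ContDiffAt ℝ (⊤ : ℕ∞) (fderiv ℝ f) x :=
    hf.fderiv_right (m := (⊤ : ℕ∞)) (by exact_mod_cast le_rfl)
  exact (ContinuousLinearMap.apply ℝ F (EuclideanSpace.single i 1)).contDiff.contDiffAt.comp x h1

lemma pd_add {F : Type*} [NormedAddCommGroup F] [NormedSpace ℝ F]
    {f g : E2 → F} {x : E2} (hf : DifferentiableAt ℝ f x) (hg : DifferentiableAt ℝ g x)
    (i : Fin 2) :
    pd i (fun y => f y + g y) x = pd i f x + pd i g x := by
  unfold pd; rw [fderiv_fun_add hf hg]; rfl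

lemma pd_smul {F : Type*} [NormedAddCommGroup F] [NormedSpace ℝ F]
    {c : E2 → ℝ} {f : E2 → F} {x : E2}
    (hc : DifferentiableAt ℝ c x) (hf : DifferentiableAt ℝ f x) (i : Fin 2) :
    pd i (fun y => c y • f y) x = c x • pd i f x + pd i c x • f x := by
  unfold pd; rw [fderiv_fun_smul hc hf]; rfl

lemma pd_sum {F : Type*} [NormedAddCommGroup F] [NormedSpace ℝ F]
    {ι : Type*} {s : Finset ι} {A : ι → E2 → F} {x : E2}
    (h : ∀ i ∈ s, DifferentiableAt ℝ (A i) x) (i : Fin 2) :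
    pd i (fun y => ∑ a ∈ s, A a y) x = ∑ a ∈ s, pd i (A a) x := by
  unfold pd; rw [fderiv_fun_sum h, ContinuousLinearMap.sum_apply]

lemma pd_inner {f g : E2 → EuclideanSpace ℝ (Fin m)} {x : E2}
    (hf : DifferentiableAt ℝ f x) (hg : DifferentiableAt ℝ g x) (i : Fin 2) :
    pd i (fun y => ⟪f y, g y⟫) x = ⟪f x, pd i g x⟫ + ⟪pd i f x, g x⟫ := by
  unfold pd
  rw [fderiv_inner_apply ℝ hf hg]

/-! ### Metric algebra -/

lemma gm_symm (Φ : E2 → EuclideanSpace ℝ (Fin m)) (x : E2) (i j : Fin 2) :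
    gm Φ x i j = gm Φ x j i := real_inner_comm _ _

lemma det_of_gm (Φ : E2 → EuclideanSpace ℝ (Fin m)) (x : E2) :
    (Matrix.of (gm Φ x)).det = gdet Φ x := by
  rw [Matrix.det_fin_two]; rfl

lemma gdet_pos {Φ : E2 → EuclideanSpace ℝ (Fin m)} {x : E2}
    (h : LinearIndependent ℝ ![pd 0 Φ x, pd 1 Φ x]) : 0 < gdet Φ x := by
  rw [LinearIndependent.pair_iff] at h
  set a := pd 0 Φ x with ha
  set b := pd 1 Φ x with hb
  have hb0 : b ≠ 0 := by
    intro h0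
    simpa using (h 0 1 (by simp [h0])).2
  have h1 : ⟪a, b⟫ < ‖a‖ * ‖b‖ := by
    rw [inner_lt_norm_mul_iff_real]
    intro he
    have := (h ‖b‖ (-‖a‖) (by rw [neg_smul, he]; abel)).1
    exact hb0 (norm_eq_zero.mp this)
  have h2 : -⟪a, b⟫ < ‖a‖ * ‖b‖ := by
    have := inner_lt_norm_mul_iff_real (x := -a) (y := b)
    rw [inner_neg_left, norm_neg] at this
    rw [this]
    intro he
    have := (h ‖b‖ ‖a‖ (by rw [← he]; simp)).1
    exact hb0 (norm_eq_zero.mp this)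
  have hg : gdet Φ x = ‖a‖^2 * ‖b‖^2 - ⟪a,b⟫^2 := by
    unfold gdet gm
    rw [← ha, ← hb, real_inner_self_eq_norm_sq, real_inner_self_eq_norm_sq,
      real_inner_comm b a]
    ring
  rw [hg]; nlinarith

lemma ginv_entries {Φ : E2 → EuclideanSpace ℝ (Fin m)} {x : E2}
    (h : gdet Φ x ≠ 0) :
    ginv Φ x = fun i j => (gdet Φ x)⁻¹ *
      (!![gm Φ x 1 1, -gm Φ x 0 1; -gm Φ x 1 0, gm Φ x 0 0] i j) := by
  funext i j
  unfold ginv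
  rw [Matrix.inv_def, Matrix.adjugate_fin_two, det_of_gm, Ring.inverse_eq_inv]
  simp [Matrix.smul_apply, smul_eq_mul]

lemma gm_mul_ginv {Φ : E2 → EuclideanSpace ℝ (Fin m)} {x : E2}
    (h : gdet Φ x ≠ 0) (i j : Fin 2) :
    ∑ k : Fin 2, gm Φ x i k * ginv Φ x k j = if i = j then 1 else 0 := by
  have hu : IsUnit (Matrix.of (gm Φ x)).det := by
    rw [det_of_gm]; exact isUnit_iff_ne_zero.mpr h
  have h2 := congrFun (congrFun (Matrix.mul_nonsing_inv (Matrix.of (gm Φ x)) hu) i) j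
  rw [Matrix.mul_apply] at h2
  simpa [Matrix.one_apply, ginv] using h2

lemma ginv_mul_gm {Φ : E2 → EuclideanSpace ℝ (Fin m)} {x : E2}
    (h : gdet Φ x ≠ 0) (i j : Fin 2) :
    ∑ k : Fin 2, ginv Φ x i k * gm Φ x k j = if i = j then 1 else 0 := by
  have hu : IsUnit (Matrix.of (gm Φ x)).det := by
    rw [det_of_gm]; exact isUnit_iff_ne_zero.mpr h
  have h2 := congrFun (congrFun (Matrix.nonsing_inv_mul (Matrix.of (gm Φ x)) hu) i) j
  rw [Matrix.mul_apply] at h2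
  simpa [Matrix.one_apply, ginv] using h2

/-! ### Projection lemmas -/

def tsp (Φ : E2 → EuclideanSpace ℝ (Fin m)) (x : E2) : Submodule ℝ (EuclideanSpace ℝ (Fin m)) :=
  Submodule.span ℝ {pd 0 Φ x, pd 1 Φ x}

lemma pd_mem_tsp (Φ : E2 → EuclideanSpace ℝ (Fin m)) (x : E2) (c : Fin 2) :
    pd c Φ x ∈ tsp Φ x := by
  apply Submodule.subset_span
  fin_cases c
  · exact Set.mem_insert _ _
  · exact Set.mem_insert_of_mem _ rfl

lemma piN_mem (Φ : E2 → EuclideanSpace ℝ (Fin m)) (x : E2) (v : EuclideanSpace ℝ (Fin m)) :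
    piN Φ x v ∈ (tsp Φ x)ᗮ := SetLike.coe_mem _

lemma inner_normal_tangent {Φ : E2 → EuclideanSpace ℝ (Fin m)} {x : E2}
    {N : EuclideanSpace ℝ (Fin m)} (hN : N ∈ (tsp Φ x)ᗮ) (c : Fin 2) :
    ⟪N, pd c Φ x⟫ = 0 :=
  (Submodule.mem_orthogonal' _ _).mp hN (pd c Φ x) (pd_mem_tsp Φ x c)

lemma piN_add (Φ : E2 → EuclideanSpace ℝ (Fin m)) (x : E2) (u v : EuclideanSpace ℝ (Fin m)) :
    piN Φ x (u + v) = piN Φ x u + piN Φ x v := by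
  unfold piN; rw [map_add]; rfl

lemma piN_smul (Φ : E2 → EuclideanSpace ℝ (Fin m)) (x : E2) (c : ℝ) (v : EuclideanSpace ℝ (Fin m)) :
    piN Φ x (c • v) = c • piN Φ x v := by
  unfold piN; rw [map_smul]; rfl

lemma piN_sum (Φ : E2 → EuclideanSpace ℝ (Fin m)) (x : E2) {ι : Type*} (s : Finset ι)
    (f : ι → EuclideanSpace ℝ (Fin m)) :
    piN Φ x (∑ a ∈ s, f a) = ∑ a ∈ s, piN Φ x (f a) := by
  unfold piN; rw [map_sum]; push_cast; rfl

lemma piN_eq {Φ : E2 → EuclideanSpace ℝ (Fin m)} {x : E2}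
    (h : LinearIndependent ℝ ![pd 0 Φ x, pd 1 Φ x]) (v : EuclideanSpace ℝ (Fin m)) :
    piN Φ x v = v - ∑ a : Fin 2, ∑ b : Fin 2,
      (ginv Φ x a b * ⟪v, pd b Φ x⟫) • pd a Φ x := by
  have hdet : gdet Φ x ≠ 0 := (gdet_pos h).ne'
  set t : EuclideanSpace ℝ (Fin m) :=
    ∑ a : Fin 2, ∑ b : Fin 2, (ginv Φ x a b * ⟪v, pd b Φ x⟫) • pd a Φ x with ht
  have htmem : t ∈ tsp Φ x := by
    apply Submodule.sum_mem
    intro a _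
    apply Submodule.sum_mem
    intro b _
    exact Submodule.smul_mem _ _ (pd_mem_tsp Φ x a)
  have key : ∀ c : Fin 2, ⟪pd c Φ x, t⟫ = ⟪pd c Φ x, v⟫ := by
    intro c
    rw [ht]
    calc ⟪pd c Φ x, ∑ a : Fin 2, ∑ b : Fin 2, (ginv Φ x a b * ⟪v, pd b Φ x⟫) • pd a Φ x⟫
        = ∑ a : Fin 2, ∑ b : Fin 2, (ginv Φ x a b * ⟪v, pd b Φ x⟫) * ⟪pd c Φ x, pd a Φ x⟫ := by
          simp only [inner_sum, real_inner_smul_right]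
      _ = ∑ a : Fin 2, ∑ b : Fin 2, (ginv Φ x a b * ⟪v, pd b Φ x⟫) * gm Φ x c a := rfl
      _ = ∑ b : Fin 2, (∑ a : Fin 2, gm Φ x c a * ginv Φ x a b) * ⟪v, pd b Φ x⟫ := by
          rw [Finset.sum_comm]
          simp only [Finset.sum_mul]
          apply Finset.sum_congr rfl; intro b _
          apply Finset.sum_congr rfl; intro a _
          ring
      _ = ∑ b : Fin 2, (if c = b then (1:ℝ) else 0) * ⟪v, pd b Φ x⟫ := by
          simp only [gm_mul_ginv hdet]
      _ = ⟪v, pd c Φ x⟫ := by simp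
      _ = ⟪pd c Φ x, v⟫ := real_inner_comm _ _
  unfold piN
  rw [← Submodule.starProjection_apply]
  apply Submodule.eq_starProjection_of_mem_of_inner_eq_zero
  · rw [Submodule.mem_orthogonal]
    intro u hu
    obtain ⟨c, d, rfl⟩ := Submodule.mem_span_pair.mp hu
    have h0 := key 0
    have h1 := key 1
    simp only [inner_add_left, real_inner_smul_left, inner_sub_right, h0, h1]
    ring
  · intro w hw
    have hsub : v - (v - t) = t := by abel
    rw [hsub]
    rw [Submodule.mem_orthogonal] at hw
    exact hw t htmem

lemma piN_tangent_zero {Φ : E2 → EuclideanSpace ℝ (Fin m)} {x : E2}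
    (h : LinearIndependent ℝ ![pd 0 Φ x, pd 1 Φ x]) (c : Fin 2) :
    piN Φ x (pd c Φ x) = 0 := by
  have hdet : gdet Φ x ≠ 0 := (gdet_pos h).ne'
  rw [piN_eq h, sub_eq_zero]
  have hg : ∀ b : Fin 2, ⟪pd c Φ x, pd b Φ x⟫ = gm Φ x b c := fun b => gm_symm Φ x c b
  refine Eq.symm ?_
  calc (∑ a : Fin 2, ∑ b : Fin 2, (ginv Φ x a b * ⟪pd c Φ x, pd b Φ x⟫) • pd a Φ x)
      = ∑ a : Fin 2, (∑ b : Fin 2, ginv Φ x a b * gm Φ x b c) • pd a Φ x := by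
        simp only [hg, ← Finset.sum_smul]
    _ = ∑ a : Fin 2, (if a = c then (1:ℝ) else 0) • pd a Φ x := by
        simp only [ginv_mul_gm hdet]
    _ = pd c Φ x := by simp

/-- `H·(w − π_n w) = 0` for normal `H`. -/
lemma inner_normal_piN {Φ : E2 → EuclideanSpace ℝ (Fin m)} {x : E2}
    (h : LinearIndependent ℝ ![pd 0 Φ x, pd 1 Φ x])
    {N : EuclideanSpace ℝ (Fin m)} (hN : N ∈ (tsp Φ x)ᗮ) (w : EuclideanSpace ℝ (Fin m)) :
    ⟪N, piN Φ x w⟫ = ⟪N, w⟫ := by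
  rw [piN_eq h, inner_sub_right]
  have : ⟪N, ∑ a : Fin 2, ∑ b : Fin 2, (ginv Φ x a b * ⟪w, pd b Φ x⟫) • pd a Φ x⟫ = 0 := by
    simp only [inner_sum, real_inner_smul_right]
    apply Finset.sum_eq_zero; intro a _
    apply Finset.sum_eq_zero; intro b _
    rw [inner_normal_tangent hN a]; ring
  rw [this, sub_zero]

lemma mcv_mem (Φ : E2 → EuclideanSpace ℝ (Fin m)) (x : E2) :
    mcv Φ x ∈ (tsp Φ x)ᗮ := by
  unfold mcv
  apply Submodule.smul_mem
  apply Submodule.sum_mem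
  intro i _
  apply Submodule.sum_mem
  intro j _
  exact Submodule.smul_mem _ _ (piN_mem Φ x _)

/-! ### Smoothness -/

section Smooth
variable {Φ : E2 → EuclideanSpace ℝ (Fin m)}
  (hΦ : ContDiffOn ℝ (⊤ : ℕ∞) Φ Disk) (himm : ∀ x ∈ Disk, LinearIndependent ℝ ![pd 0 Φ x, pd 1 Φ x])

include hΦ

lemma smooth_Phi {y : E2} (hy : y ∈ Disk) : ContDiffAt ℝ (⊤ : ℕ∞) Φ y :=
  (hΦ.contDiffAt (disk_mem_nhds hy)).of_le (by simp)

lemma smooth_pdPhi {y : E2} (hy : y ∈ Disk) (i : Fin 2) :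
    ContDiffAt ℝ (⊤ : ℕ∞) (pd i Φ) y :=
  pd_contDiffAt (smooth_Phi hΦ hy) i

lemma smooth_pdpdPhi {y : E2} (hy : y ∈ Disk) (i j : Fin 2) :
    ContDiffAt ℝ (⊤ : ℕ∞) (pd i (pd j Φ)) y :=
  pd_contDiffAt (smooth_pdPhi hΦ hy j) i

lemma smooth_gm {y : E2} (hy : y ∈ Disk) (i j : Fin 2) :
    ContDiffAt ℝ (⊤ : ℕ∞) (fun z => gm Φ z i j) y :=
  ContDiffAt.inner ℝ (smooth_pdPhi hΦ hy i) (smooth_pdPhi hΦ hy j)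

lemma smooth_gdet {y : E2} (hy : y ∈ Disk) :
    ContDiffAt ℝ (⊤ : ℕ∞) (fun z => gdet Φ z) y := by
  unfold gdet
  exact ((smooth_gm hΦ hy 0 0).mul (smooth_gm hΦ hy 1 1)).sub
    ((smooth_gm hΦ hy 0 1).mul (smooth_gm hΦ hy 1 0))

include himm in
lemma smooth_ginv {y : E2} (hy : y ∈ Disk) (i j : Fin 2) :
    ContDiffAt ℝ (⊤ : ℕ∞) (fun z => ginv Φ z i j) y := by
  have hev : (fun z => ginv Φ z i j) =ᶠ[nhds y]
      (fun z => (gdet Φ z)⁻¹ *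
        (!![gm Φ z 1 1, -gm Φ z 0 1; -gm Φ z 1 0, gm Φ z 0 0] i j)) := by
    filter_upwards [disk_mem_nhds hy] with z hz
    rw [ginv_entries (gdet_pos (himm z hz)).ne']
  apply ContDiffAt.congr_of_eventuallyEq ?_ hev
  apply ContDiffAt.mul
  · exact (smooth_gdet hΦ hy).inv (gdet_pos (himm y hy)).ne'
  · fin_cases i <;> fin_cases j <;>
      simp only [Fin.mk_zero, Fin.mk_one, Fin.isValue, Matrix.cons_val', Matrix.cons_val_zero,
        Matrix.cons_val_one, Matrix.head_cons, Matrix.empty_val', Matrix.cons_val_fin_one,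
        Matrix.head_fin_const] <;>
      first
        | exact smooth_gm hΦ hy 1 1
        | exact (smooth_gm hΦ hy 0 1).neg
        | exact (smooth_gm hΦ hy 1 0).neg
        | exact smooth_gm hΦ hy 0 0

lemma smooth_sqrt_gdet {y : E2} (hy : y ∈ Disk) (hpos : 0 < gdet Φ y) :
    ContDiffAt ℝ (⊤ : ℕ∞) (fun z => Real.sqrt (gdet Φ z)) y :=
  (Real.contDiffAt_sqrt hpos.ne').comp y (smooth_gdet hΦ hy)

include himm in
lemma smooth_piN_comp {F : E2 → EuclideanSpace ℝ (Fin m)} {y : E2} (hy : y ∈ Disk)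
    (hF : ContDiffAt ℝ (⊤ : ℕ∞) F y) :
    ContDiffAt ℝ (⊤ : ℕ∞) (fun z => piN Φ z (F z)) y := by
  have hev : (fun z => piN Φ z (F z)) =ᶠ[nhds y]
      (fun z => F z - ∑ a : Fin 2, ∑ b : Fin 2,
        (ginv Φ z a b * ⟪F z, pd b Φ z⟫) • pd a Φ z) := by
    filter_upwards [disk_mem_nhds hy] with z hz
    rw [piN_eq (himm z hz)]
  apply ContDiffAt.congr_of_eventuallyEq ?_ hev
  apply hF.sub
  apply ContDiffAt.sum; intro a _
  apply ContDiffAt.sum; intro b _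
  exact ((smooth_ginv hΦ himm hy a b).mul
    (ContDiffAt.inner ℝ hF (smooth_pdPhi hΦ hy b))).smul (smooth_pdPhi hΦ hy a)

include himm in
lemma smooth_sff {y : E2} (hy : y ∈ Disk) (i j : Fin 2) :
    ContDiffAt ℝ (⊤ : ℕ∞) (fun z => sff Φ z i j) y :=
  smooth_piN_comp hΦ himm hy (smooth_pdpdPhi hΦ hy i j)

include himm in
lemma smooth_mcv {y : E2} (hy : y ∈ Disk) :
    ContDiffAt ℝ (⊤ : ℕ∞) (mcv Φ) y := by
  unfold mcv
  apply ContDiffAt.const_smul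
  apply ContDiffAt.sum; intro i _
  apply ContDiffAt.sum; intro j _
  exact (smooth_ginv hΦ himm hy i j).smul (smooth_sff hΦ himm hy i j)

include himm in
lemma smooth_pd_mcv {y : E2} (hy : y ∈ Disk) (k : Fin 2) :
    ContDiffAt ℝ (⊤ : ℕ∞) (pd k (mcv Φ)) y :=
  pd_contDiffAt (smooth_mcv hΦ himm hy) k

end Smooth

/-! ### The main computation -/

lemma diffAt_of_smooth {F : Type*} [NormedAddCommGroup F] [NormedSpace ℝ F]
    {f : E2 → F} {x : E2} (h : ContDiffAt ℝ (⊤ : ℕ∞) f x) : DifferentiableAt ℝ f x :=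
  h.differentiableAt (by simp)

/-- The coefficient `S_{ja} = ∑ g^{jk} g^{ab} ⟪H, ∂_k∂_bΦ⟫`. -/
def coefS (Φ : E2 → EuclideanSpace ℝ (Fin m)) (x : E2) (j a : Fin 2) : ℝ :=
  ∑ k : Fin 2, ∑ b : Fin 2, ginv Φ x j k * ginv Φ x a b * ⟪mcv Φ x, pd k (pd b Φ) x⟫

def Afun (Φ : E2 → EuclideanSpace ℝ (Fin m)) (j : Fin 2) (y : E2) : EuclideanSpace ℝ (Fin m) :=
  Real.sqrt (gdet Φ y) • ∑ k : Fin 2, ginv Φ y j k • pd k (mcv Φ) y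

def Bfun (Φ : E2 → EuclideanSpace ℝ (Fin m)) (j : Fin 2) (y : E2) : EuclideanSpace ℝ (Fin m) :=
  ∑ a : Fin 2, (Real.sqrt (gdet Φ y) * coefS Φ y j a) • pd a Φ y

section Main
variable {Φ : E2 → EuclideanSpace ℝ (Fin m)}
  (hΦ : ContDiffOn ℝ (⊤ : ℕ∞) Φ Disk) (himm : ∀ x ∈ Disk, LinearIndependent ℝ ![pd 0 Φ x, pd 1 Φ x])

include hΦ himm

lemma pdH_tangent {x : E2} (hx : x ∈ Disk) (j a : Fin 2) :
    ⟪pd j (mcv Φ) x, pd a Φ x⟫ = -⟪mcv Φ x, pd j (pd a Φ) x⟫ := by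
  have hzero : (fun y => ⟪mcv Φ y, pd a Φ y⟫) =ᶠ[nhds x] (fun _ => (0:ℝ)) := by
    filter_upwards [disk_mem_nhds hx] with z hz
    exact inner_normal_tangent (mcv_mem Φ z) a
  have hd := pd_inner (diffAt_of_smooth (smooth_mcv hΦ himm hx))
    (diffAt_of_smooth (smooth_pdPhi hΦ hx a)) j
  have h0 : pd j (fun y => ⟪mcv Φ y, pd a Φ y⟫) x = 0 := by
    rw [pd_congr hzero j]
    unfold pd
    simp [fderiv_const]
  rw [h0] at hd
  linarith [hd]

lemma smooth_coefS {y : E2} (hy : y ∈ Disk) (j a : Fin 2) :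
    ContDiffAt ℝ (⊤ : ℕ∞) (fun z => coefS Φ z j a) y := by
  unfold coefS
  apply ContDiffAt.sum; intro k _
  apply ContDiffAt.sum; intro b _
  exact ((smooth_ginv hΦ himm hy j k).mul (smooth_ginv hΦ himm hy a b)).mul
    (ContDiffAt.inner ℝ (smooth_mcv hΦ himm hy) (smooth_pdpdPhi hΦ hy k b))

lemma smooth_Afun {y : E2} (hy : y ∈ Disk) (j : Fin 2) :
    ContDiffAt ℝ (⊤ : ℕ∞) (Afun Φ j) y := by
  unfold Afun
  apply ContDiffAt.smul (smooth_sqrt_gdet hΦ hy (gdet_pos (himm y hy)))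
  apply ContDiffAt.sum; intro k _
  exact (smooth_ginv hΦ himm hy j k).smul (smooth_pd_mcv hΦ himm hy k)

lemma smooth_Bfun {y : E2} (hy : y ∈ Disk) (j : Fin 2) :
    ContDiffAt ℝ (⊤ : ℕ∞) (Bfun Φ j) y := by
  unfold Bfun
  apply ContDiffAt.sum; intro a _
  exact ((smooth_sqrt_gdet hΦ hy (gdet_pos (himm y hy))).mul
    (smooth_coefS hΦ himm hy j a)).smul (smooth_pdPhi hΦ hy a)

lemma Psi_eq {y : E2} (hy : y ∈ Disk) (j : Fin 2) :
    Real.sqrt (gdet Φ y) • ∑ k : Fin 2, ginv Φ y j k • piN Φ y (pd k (mcv Φ) y)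
      = Afun Φ j y + Bfun Φ j y := by
  have hLI := himm y hy
  have hsub : ∀ k b : Fin 2, ⟪pd k (mcv Φ) y, pd b Φ y⟫ = -⟪mcv Φ y, pd k (pd b Φ) y⟫ :=
    fun k b => pdH_tangent hΦ himm hy k b
  simp only [piN_eq hLI]
  simp only [hsub]
  unfold Afun Bfun coefS
  simp only [Fin.sum_univ_two, smul_sub, smul_add, smul_smul, mul_neg, neg_smul,
    mul_add, add_smul]
  module

lemma nlap_eq {x : E2} (hbih : ∀ y ∈ Disk, lapB Φ (mcv Φ) y = 0) (hx : x ∈ Disk) :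
    nlap Φ (mcv Φ) x = ∑ j : Fin 2, ∑ a : Fin 2, coefS Φ x j a • sff Φ x j a := by
  have hLI := himm x hx
  have hdet := gdet_pos hLI
  have hsq : Real.sqrt (gdet Φ x) ≠ 0 := (Real.sqrt_pos.mpr hdet).ne'
  have hAdiff : ∀ j : Fin 2, DifferentiableAt ℝ (Afun Φ j) x :=
    fun j => diffAt_of_smooth (smooth_Afun hΦ himm hx j)
  have hBdiff : ∀ j : Fin 2, DifferentiableAt ℝ (Bfun Φ j) x :=
    fun j => diffAt_of_smooth (smooth_Bfun hΦ himm hx j)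
  have hcdiff : ∀ j a : Fin 2,
      DifferentiableAt ℝ (fun y => Real.sqrt (gdet Φ y) * coefS Φ y j a) x :=
    fun j a => diffAt_of_smooth ((smooth_sqrt_gdet hΦ hx hdet).mul (smooth_coefS hΦ himm hx j a))
  have hpddiff : ∀ a : Fin 2, DifferentiableAt ℝ (pd a Φ) x :=
    fun a => diffAt_of_smooth (smooth_pdPhi hΦ hx a)
  -- Step 2: split the derivative
  have step2 : ∀ j : Fin 2,
      pd j (fun y => Real.sqrt (gdet Φ y) •
          ∑ k : Fin 2, ginv Φ y j k • piN Φ y (pd k (mcv Φ) y)) x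
        = pd j (Afun Φ j) x + pd j (Bfun Φ j) x := by
    intro j
    have hev : (fun y => Real.sqrt (gdet Φ y) •
        ∑ k : Fin 2, ginv Φ y j k • piN Φ y (pd k (mcv Φ) y))
        =ᶠ[nhds x] (fun y => Afun Φ j y + Bfun Φ j y) := by
      filter_upwards [disk_mem_nhds hx] with z hz
      exact Psi_eq hΦ himm hz j
    rw [pd_congr hev j, pd_add (hAdiff j) (hBdiff j) j]
  -- Step 3: biharmonicity kills the A-part
  have step3 : ∑ j : Fin 2, pd j (Afun Φ j) x = 0 := by
    have h0 := hbih x hx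
    have hrfl : lapB Φ (mcv Φ) x
        = (Real.sqrt (gdet Φ x))⁻¹ • ∑ j : Fin 2, pd j (Afun Φ j) x := rfl
    rw [hrfl] at h0
    rcases smul_eq_zero.mp h0 with h | h
    · exact absurd h (inv_ne_zero hsq)
    · exact h
  -- Step 4: derivative of the B-part
  have step4 : ∀ j : Fin 2, pd j (Bfun Φ j) x
      = ∑ a : Fin 2, ((Real.sqrt (gdet Φ x) * coefS Φ x j a) • pd j (pd a Φ) x
          + pd j (fun y => Real.sqrt (gdet Φ y) * coefS Φ y j a) x • pd a Φ x) := by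
    intro j
    unfold Bfun
    rw [pd_sum (A := fun a y => (Real.sqrt (gdet Φ y) * coefS Φ y j a) • pd a Φ y) (fun a _ => ((hcdiff j a).smul (hpddiff a))) j]
    apply Finset.sum_congr rfl; intro a _
    rw [pd_smul (hcdiff j a) (hpddiff a) j]
  -- Assemble
  have hnlap : nlap Φ (mcv Φ) x = (Real.sqrt (gdet Φ x))⁻¹ • piN Φ x
      (∑ j : Fin 2, pd j (fun y => Real.sqrt (gdet Φ y) •
        ∑ k : Fin 2, ginv Φ y j k • piN Φ y (pd k (mcv Φ) y)) x) := rfl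
  rw [hnlap]
  simp only [step2]
  rw [Finset.sum_add_distrib, step3, zero_add]
  simp only [step4]
  rw [piN_sum]
  have hterm : ∀ j : Fin 2, piN Φ x
      (∑ a : Fin 2, ((Real.sqrt (gdet Φ x) * coefS Φ x j a) • pd j (pd a Φ) x
        + pd j (fun y => Real.sqrt (gdet Φ y) * coefS Φ y j a) x • pd a Φ x))
      = ∑ a : Fin 2, (Real.sqrt (gdet Φ x) * coefS Φ x j a) • sff Φ x j a := by
    intro j
    rw [piN_sum]
    apply Finset.sum_congr rfl; intro a _
    rw [piN_add, piN_smul, piN_smul, piN_tangent_zero hLI a, smul_zero, add_zero]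
    rfl
  simp only [hterm]
  rw [Finset.smul_sum]
  apply Finset.sum_congr rfl; intro j _
  rw [Finset.smul_sum]
  apply Finset.sum_congr rfl; intro a _
  rw [smul_smul, ← mul_assoc, inv_mul_cancel₀ hsq, one_mul]

end Main

end

open scoped RealInnerProductSpace in
/-- for biharmonic immersions, `Δ_⊥H = g^{jl}g^{km}(H·h_{lm})h_{jk}`, and hence
the Willmore operator equals `2g^{jl}g^{km}(H·h_{lm})h_{jk} - 2|H|²H`. -/
theorem biharmonic_normal_laplacian_and_willmore {m : ℕ} (hm : 3 ≤ m)
    (Φ : E2 → EuclideanSpace ℝ (Fin m))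
    (hΦ : ContDiffOn ℝ (⊤ : ℕ∞) Φ Disk) (himm : ImmersedOn Φ)
    (hbih : ∀ x ∈ Disk, lapB Φ (mcv Φ) x = 0) :
    ∀ x ∈ Disk,
      (nlap Φ (mcv Φ) x
        = ∑ j : Fin 2, ∑ k : Fin 2,
            (∑ l : Fin 2, ∑ i : Fin 2,
              ginv Φ x j l * ginv Φ x k i * ⟪mcv Φ x, sff Φ x l i⟫) • sff Φ x j k)
      ∧ (willmoreOp Φ x
        = (2:ℝ) • (∑ j : Fin 2, ∑ k : Fin 2,
            (∑ l : Fin 2, ∑ i : Fin 2,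
              ginv Φ x j l * ginv Φ x k i * ⟪mcv Φ x, sff Φ x l i⟫) • sff Φ x j k)
          - (2 * ‖mcv Φ x‖ ^ 2) • mcv Φ x) := by
  intro x hx
  have himm' : ∀ y ∈ Disk, LinearIndependent ℝ ![pd 0 Φ y, pd 1 Φ y] := himm
  have hLI := himm' x hx
  have hsffEq : ∀ k b : Fin 2, ⟪mcv Φ x, pd k (pd b Φ) x⟫ = ⟪mcv Φ x, sff Φ x k b⟫ :=
    fun k b => (inner_normal_piN hLI (mcv_mem Φ x) _).symm
  have part1 : nlap Φ (mcv Φ) x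
      = ∑ j : Fin 2, ∑ k : Fin 2,
          (∑ l : Fin 2, ∑ i : Fin 2,
            ginv Φ x j l * ginv Φ x k i * ⟪mcv Φ x, sff Φ x l i⟫) • sff Φ x j k := by
    rw [nlap_eq hΦ himm' hbih hx]
    apply Finset.sum_congr rfl; intro j _
    apply Finset.sum_congr rfl; intro a _
    congr 1
    unfold coefS
    apply Finset.sum_congr rfl; intro k _
    apply Finset.sum_congr rfl; intro b _
    rw [hsffEq k b]
  refine ⟨part1, ?_⟩
  unfold willmoreOp
  rw [part1]
  have hQ : (∑ i : Fin 2, ∑ j : Fin 2, ∑ k : Fin 2, ∑ l : Fin 2,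
        (ginv Φ x i k * ginv Φ x j l * ⟪sff Φ x k l, mcv Φ x⟫) • sff Φ x i j)
      = ∑ j : Fin 2, ∑ k : Fin 2,
          (∑ l : Fin 2, ∑ i : Fin 2,
            ginv Φ x j l * ginv Φ x k i * ⟪mcv Φ x, sff Φ x l i⟫) • sff Φ x j k := by
    apply Finset.sum_congr rfl; intro i _
    apply Finset.sum_congr rfl; intro j _
    simp only [Finset.sum_smul]
    apply Finset.sum_congr rfl; intro k _
    apply Finset.sum_congr rfl; intro l _
    rw [real_inner_comm]
  rw [hQ, two_smul]
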